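/- For the binary erasure eavesdropper channel with erasure probability p ∈ (0,1) (Y = X noiselessly, Z = X with probability 1−p and Z = erasure with probability p, X binary), the message-deniability capacity region {(R,D)} given by: there exists V with V − X − Z, 0 ≤ R ≤ H(X) − (1−p)H(X|V), 0 ≤ D ≤ min(R, p·H(X|V)), equals the region {(R,D) : 0 ≤ R ≤ 1, 0 ≤ D ≤ min(p(1−R)/(1−p), R)}. -/

import Mathlib

open Finset

section PD
variable {Ω α β γ : Type*}

open Classical in
/-- Pushforward distribution of `p` under the random variable `f`. -/
noncomputable def push [Fintype Ω] (p : Ω → ℝ) (f : Ω → α) : α → ℝ :=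
  fun a => ∑ ω, if f ω = a then p ω else 0

/-- Shannon entropy (base 2) of a pmf on a finite alphabet. -/
noncomputable def ent [Fintype α] (q : α → ℝ) : ℝ := -∑ a, q a * Real.logb 2 (q a)

/-- Entropy of a random variable `f` under the distribution `p` on the sample space. -/
noncomputable def H [Fintype Ω] [Fintype α] (p : Ω → ℝ) (f : Ω → α) : ℝ := ent (push p f)

/-- Conditional entropy `H(f | g)`. -/
noncomputable def condH [Fintype Ω] [Fintype α] [Fintype β] (p : Ω → ℝ) (f : Ω → α) (g : Ω → β) : ℝ :=
  H p (fun ω => (f ω, g ω)) - H p g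

/-- Mutual information `I(f ; g)`. -/
noncomputable def mi [Fintype Ω] [Fintype α] [Fintype β] (p : Ω → ℝ) (f : Ω → α) (g : Ω → β) : ℝ :=
  H p f + H p g - H p (fun ω => (f ω, g ω))

/-- Conditional mutual information `I(f ; g | h)`. -/
noncomputable def cmi [Fintype Ω] [Fintype α] [Fintype β] [Fintype γ]
    (p : Ω → ℝ) (f : Ω → α) (g : Ω → β) (h : Ω → γ) : ℝ :=
  condH p f h + condH p g h - condH p (fun ω => (f ω, g ω)) h

/-- `p` is a probability mass function. -/
def IsProb [Fintype Ω] (p : Ω → ℝ) : Prop := (∀ ω, 0 ≤ p ω) ∧ ∑ ω, p ω = 1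

/-- Markov chain `f − g − h`: conditional independence of `f` and `h` given `g`,
expressed as `P(a,b,c)·P(b) = P(a,b)·P(b,c)`. -/
def Markov [Fintype Ω] (p : Ω → ℝ) (f : Ω → α) (g : Ω → β) (h : Ω → γ) : Prop :=
  ∀ a b c, push p (fun ω => (f ω, g ω, h ω)) (a, b, c) * push p g b =
    push p (fun ω => (f ω, g ω)) (a, b) * push p (fun ω => (g ω, h ω)) (b, c)

open Classical in
/-- Kullback–Leibler divergence (base 2), with the sum restricted to the support of `P`. -/
noncomputable def KL [Fintype α] (P Q : α → ℝ) : ℝ :=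
  ∑ a, if 0 < P a then P a * Real.logb 2 (P a / Q a) else 0

end PD

/-- The message-deniability region of the binary erasure eavesdropper channel, as a
union over auxiliary variables `V` with `V − X − Z`:  `Z = X` w.p. `1−p`, `Z = erasure`
w.p. `p` (erasure modelled as `none`), `Y = X` noiselessly. -/
def becRegionAux (pe : ℝ) : Set (ℝ × ℝ) :=
  {rd | ∃ (Ω : Type) (_ : Fintype Ω) (q : Ω → ℝ)
          (VT : Type) (_ : Fintype VT)
          (fX : Ω → Bool) (fZ : Ω → Option Bool) (fV : Ω → VT),
        IsProb q ∧
        (∀ x : Bool,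
          push q (fun ω => (fX ω, fZ ω)) (x, some x) = (1 - pe) * push q fX x ∧
          push q (fun ω => (fX ω, fZ ω)) (x, none) = pe * push q fX x ∧
          push q (fun ω => (fX ω, fZ ω)) (x, some !x) = 0) ∧
        Markov q fV fX fZ ∧
        0 ≤ rd.1 ∧ rd.1 ≤ H q fX - (1 - pe) * condH q fX fV ∧
        0 ≤ rd.2 ∧ rd.2 ≤ min rd.1 (pe * condH q fX fV)}

/-- The same region in closed form. -/
def becRegionClosed (pe : ℝ) : Set (ℝ × ℝ) :=
  {rd | 0 ≤ rd.1 ∧ rd.1 ≤ 1 ∧ 0 ≤ rd.2 ∧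
        rd.2 ≤ min (pe * (1 - rd.1) / (1 - pe)) rd.1}

/-!
For binary `X`, `H(X) ≤ 1` and `H(X|V) ≥ 0`, so writing `a = H(X|V)` every achievable pair
satisfies `R ≤ 1 - (1-p)a ≤ 1` and `D ≤ p a ≤ p(1-R)/(1-p)`. Conversely, for `(R,D)` in the
closed region the level `a = D/p` lies in `[0,1]`, and it is attained by a uniform `X` with `V`
an erasure of `X` with probability `a`, independent of the channel's erasure: then `H(X) = 1`
and `H(X|V) = a`.
-/

section Entropy
variable {Ω α β : Type*} [Fintype Ω] {q : Ω → ℝ}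

lemma push_nonneg (hq : ∀ ω, 0 ≤ q ω) (f : Ω → α) (a : α) : 0 ≤ push q f a := by
  classical
  exact Finset.sum_nonneg fun ω _ => by split_ifs <;> simp [hq ω]

lemma sum_push [Fintype α] (q : Ω → ℝ) (f : Ω → α) : ∑ a, push q f a = ∑ ω, q ω := by
  classical
  unfold push
  rw [Finset.sum_comm]
  simp

lemma push_eq_sum_push_prod [Fintype α] (q : Ω → ℝ) (f : Ω → α) (g : Ω → β) (b : β) :
    push q g b = ∑ a, push q (fun ω => (f ω, g ω)) (a, b) := by
  classical
  unfold push
  rw [Finset.sum_comm]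
  refine Finset.sum_congr rfl fun ω _ => ?_
  simp [Prod.ext_iff, ite_and]

lemma ent_eq_sum_negMulLog [Fintype α] (r : α → ℝ) :
    ent r = (∑ a, Real.negMulLog (r a)) / Real.log 2 := by
  simp only [ent, Real.negMulLog, Real.logb, Finset.sum_div]
  rw [← Finset.sum_neg_distrib]
  exact Finset.sum_congr rfl fun a _ => by ring

lemma ent_le_logb_card [Fintype α] {r : α → ℝ} (hr : ∀ a, 0 ≤ r a) (hr1 : ∑ a, r a = 1) :
    ent r ≤ Real.logb 2 (Fintype.card α) := by
  have hn : (0 : ℝ) < Fintype.card α := by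
    have : Nonempty α := by
      by_contra h
      simp [not_nonempty_iff.mp h] at hr1
    exact_mod_cast Fintype.card_pos
  have jensen := Real.concaveOn_negMulLog.le_map_sum (t := Finset.univ)
    (w := fun _ => (Fintype.card α : ℝ)⁻¹) (p := r) (fun _ _ => by positivity)
    (by simp [Finset.card_univ, hn.ne']) (fun a _ => hr a)
  simp only [smul_eq_mul, ← Finset.mul_sum, hr1, mul_one] at jensen
  rw [Real.negMulLog, Real.log_inv] at jensen
  rw [ent_eq_sum_negMulLog, Real.logb, div_le_div_iff_of_pos_right (Real.log_pos one_lt_two)]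
  have := mul_le_mul_of_nonneg_left jensen hn.le
  field_simp at this
  linarith

lemma H_le_one_of_bool (hq : IsProb q) (f : Ω → Bool) : H q f ≤ 1 := by
  have := ent_le_logb_card (push_nonneg hq.1 f) (by rw [sum_push, hq.2])
  simpa [H, Real.logb_self_eq_one one_lt_two] using this

lemma condH_nonneg [Fintype α] [Fintype β] (hq : ∀ ω, 0 ≤ q ω) (f : Ω → α) (g : Ω → β) :
    0 ≤ condH q f g := by
  set P := push q (fun ω => (f ω, g ω))
  have hP : ∀ a b, 0 ≤ P (a, b) := fun a b => push_nonneg hq _ _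
  have hmarg := push_eq_sum_push_prod q f g
  have hcondH : condH q f g =
      ∑ b, ∑ a, P (a, b) * (Real.logb 2 (push q g b) - Real.logb 2 (P (a, b))) := by
    simp only [condH, H, ent, Fintype.sum_prod_type_right, hmarg, Finset.sum_mul, mul_sub,
      Finset.sum_sub_distrib]
    ring
  rw [hcondH]
  refine Finset.sum_nonneg fun b _ => Finset.sum_nonneg fun a _ => ?_
  rcases (hP a b).eq_or_lt with h | h
  · simp [← h]
  · refine mul_nonneg h.le (sub_nonneg.2 (Real.logb_le_logb_of_le one_lt_two h ?_))
    rw [hmarg]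
    exact Finset.single_le_sum (fun a' _ => hP a' b) (Finset.mem_univ a)

end Entropy

def erasure (erased x : Bool) : Option Bool := if erased then none else some x

section ErasureModel
variable (p e : ℝ)

/-- `ω = (x, s, t)`: `X = x` is uniform and is erased independently on its way to `Z`
(when `s`, probability `p`) and to `V` (when `t`, probability `e`). -/
noncomputable def erasureModel (ω : Bool × Bool × Bool) : ℝ :=
  1 / 2 * (if ω.2.1 then p else 1 - p) * (if ω.2.2 then e else 1 - e)

lemma erasureModel_isProb (hp : p ∈ Set.Icc (0 : ℝ) 1) (he : e ∈ Set.Icc (0 : ℝ) 1) :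
    IsProb (erasureModel p e) := by
  obtain ⟨hp0, hp1⟩ := hp
  obtain ⟨he0, he1⟩ := he
  refine ⟨fun ω => ?_, ?_⟩
  · have : 0 ≤ (if ω.2.1 then p else 1 - p) := by split_ifs <;> linarith
    have : 0 ≤ (if ω.2.2 then e else 1 - e) := by split_ifs <;> linarith
    unfold erasureModel
    positivity
  · simp only [erasureModel, Fintype.sum_prod_type, Fintype.sum_bool, ↓reduceIte,
      Bool.false_eq_true]
    ring

lemma push_erasureModel_fst (x : Bool) : push (erasureModel p e) Prod.fst x = 1 / 2 := by
  cases x <;> simp [push, erasureModel, Fintype.sum_prod_type] <;> ring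

lemma erasureModel_isErasureChannel (x : Bool) :
    push (erasureModel p e) (fun ω => (ω.1, erasure ω.2.1 ω.1)) (x, some x) =
        (1 - p) * push (erasureModel p e) Prod.fst x ∧
      push (erasureModel p e) (fun ω => (ω.1, erasure ω.2.1 ω.1)) (x, none) =
        p * push (erasureModel p e) Prod.fst x ∧
      push (erasureModel p e) (fun ω => (ω.1, erasure ω.2.1 ω.1)) (x, some !x) = 0 := by
  rw [push_erasureModel_fst]
  cases x <;> refine ⟨?_, ?_, ?_⟩ <;>
    simp [push, erasureModel, erasure, Fintype.sum_prod_type] <;> ring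

lemma erasureModel_markov :
    Markov (erasureModel p e) (fun ω => erasure ω.2.2 ω.1) Prod.fst
      (fun ω => erasure ω.2.1 ω.1) := by
  intro v x z
  cases x <;> rcases v with _ | _ | _ <;> rcases z with _ | _ | _ <;>
    simp [push, erasureModel, erasure, Fintype.sum_prod_type] <;> ring

lemma H_erasureModel_fst : H (erasureModel p e) Prod.fst = 1 := by
  simp [H, ent, push_erasureModel_fst]

lemma condH_erasureModel (he : 0 ≤ e) :
    condH (erasureModel p e) Prod.fst (fun ω => erasure ω.2.2 ω.1) = e := by
  have hV : push (erasureModel p e) (fun ω => erasure ω.2.2 ω.1) =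
      fun v => if v = none then e else (1 - e) / 2 := by
    funext v
    rcases v with _ | _ | _ <;> simp [push, erasureModel, erasure, Fintype.sum_prod_type] <;> ring
  have hXV : push (erasureModel p e) (fun ω => (ω.1, erasure ω.2.2 ω.1)) =
      fun xv => if xv.2 = none then e / 2 else if xv.2 = some xv.1 then (1 - e) / 2 else 0 := by
    funext ⟨x, v⟩
    cases x <;> rcases v with _ | _ | _ <;>
      simp [push, erasureModel, erasure, Fintype.sum_prod_type] <;> ring
  have hlogb : e / 2 * Real.logb 2 (e / 2) = e / 2 * Real.logb 2 e - e / 2 := by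
    rcases he.eq_or_lt with rfl | he
    · simp
    · rw [Real.logb_div he.ne' two_ne_zero, Real.logb_self_eq_one one_lt_two]; ring
  simp only [condH, H, ent, hXV, hV, Fintype.sum_prod_type, Fintype.sum_bool, Fintype.sum_option,
    ↓reduceIte, reduceCtorEq, Option.some.injEq, Bool.true_eq_false, Bool.false_eq_true, zero_mul,
    hlogb]
  ring

end ErasureModel

lemma mem_becRegionClosed_of_le {p a h R D : ℝ} (hp : p ∈ Set.Ico (0 : ℝ) 1) (ha : 0 ≤ a)
    (hh : h ≤ 1) (hR0 : 0 ≤ R) (hR : R ≤ h - (1 - p) * a) (hD0 : 0 ≤ D)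
    (hD : D ≤ min R (p * a)) : (R, D) ∈ becRegionClosed p := by
  obtain ⟨hp0, hp1⟩ := hp
  have hDa : D ≤ p * a := hD.trans (min_le_right _ _)
  have hDR : D ≤ R := hD.trans (min_le_left _ _)
  refine ⟨hR0, by nlinarith, hD0, le_min ?_ hDR⟩
  rw [le_div_iff₀ (sub_pos.2 hp1)]
  nlinarith [mul_le_mul_of_nonneg_right hDa (sub_pos.2 hp1).le]

lemma exists_erasure_level {p R D : ℝ} (hp : p ∈ Set.Ioo (0 : ℝ) 1)
    (hRD : (R, D) ∈ becRegionClosed p) :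
    ∃ e ∈ Set.Icc (0 : ℝ) 1, R ≤ 1 - (1 - p) * e ∧ D ≤ min R (p * e) := by
  obtain ⟨hp0, hp1⟩ := hp
  obtain ⟨hR0, -, hD0, hD⟩ := hRD
  have hDR : D ≤ R := hD.trans (min_le_right _ _)
  have hDp : D * (1 - p) ≤ p * (1 - R) :=
    (le_div_iff₀ (sub_pos.2 hp1)).1 (hD.trans (min_le_left _ _))
  refine ⟨D / p, ⟨div_nonneg hD0 hp0.le, ?_⟩, ?_, ?_⟩
  · rw [div_le_one hp0]
    rcases le_or_gt R p with hRp | hpR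
    · linarith
    · nlinarith
  · rw [mul_div_assoc', le_sub_iff_add_le, ← le_sub_iff_add_le', div_le_iff₀ hp0]
    linarith
  · rw [mul_div_cancel₀ D hp0.ne']
    exact le_min hDR le_rfl

/-- Example 2 of the paper: for the binary erasure eavesdropper channel
with erasure probability `p ∈ (0,1)`, the message-deniability capacity region equals
`{(R,D) : 0 ≤ R ≤ 1, 0 ≤ D ≤ min(p(1−R)/(1−p), R)}`. -/
theorem bec_region_eq (pe : ℝ) (hpe : pe ∈ Set.Ioo (0 : ℝ) 1) :
    becRegionAux pe = becRegionClosed pe := by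
  ext ⟨R, D⟩
  constructor
  · rintro ⟨Ω, _, q, VT, _, fX, fZ, fV, hq, -, -, hR0, hR, hD0, hD⟩
    exact mem_becRegionClosed_of_le (Set.Ioo_subset_Ico_self hpe) (condH_nonneg hq.1 fX fV)
      (H_le_one_of_bool hq fX) hR0 hR hD0 hD
  · intro hRD
    obtain ⟨e, he, hR, hD⟩ := exists_erasure_level hpe hRD
    refine ⟨Bool × Bool × Bool, inferInstance, erasureModel pe e, Option Bool, inferInstance,
      Prod.fst, fun ω => erasure ω.2.1 ω.1, fun ω => erasure ω.2.2 ω.1,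
      erasureModel_isProb pe e (Set.Ioo_subset_Icc_self hpe) he,
      erasureModel_isErasureChannel pe e, erasureModel_markov pe e, hRD.1, ?_, hRD.2.2.1, ?_⟩
    · rwa [H_erasureModel_fst, condH_erasureModel pe e he.1]
    · rwa [condH_erasureModel pe e he.1]
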